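/- Partial-penalty Lasso inequality: Let θ = (θ₁, θ₂) and θ̃ minimize (1/(nh))|Y - Gθ|₂² + λ|θ₂|₁. Write Y = Gθ* + e with θ* = (θ₁*, θ₂*) and θ₂* supported on S. If (4/(nh))|G'e|_∞ ≤ λ, then (2/(nh))|G(θ̃-θ*)|₂² ≤ λ|θ̃₁ - θ₁*|₁ + 3λ|θ̃_{2,S} - θ*_{2,S}|₁ - λ|θ̃_{2,S^c}|₁. -/
import Mathlib


noncomputable section
open Matrix BigOperators Finset

def l1 {d : ℕ} (v : Fin d → ℝ) : ℝ := ∑ j, |v j|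

def sq2 {m : ℕ} (v : Fin m → ℝ) : ℝ := ∑ i, (v i) ^ 2

def linf {m : ℕ} (v : Fin m → ℝ) : ℝ := ⨆ i, |v i|

def restr {d : ℕ} (S : Finset (Fin d)) (v : Fin d → ℝ) : Fin d → ℝ :=
  fun j => if j ∈ S then v j else 0

lemma l1_nonneg {d : ℕ} (v : Fin d → ℝ) : 0 ≤ l1 v :=
  Finset.sum_nonneg fun j _ => abs_nonneg _

lemma sum_mul_le_linf_l1 {d : ℕ} (a b : Fin d → ℝ) :
    ∑ j, a j * b j ≤ linf a * l1 b := by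
  calc ∑ j, a j * b j ≤ ∑ j, |a j * b j| :=
        Finset.sum_le_sum fun j _ => le_abs_self _
    _ = ∑ j, |a j| * |b j| := by simp [abs_mul]
    _ ≤ ∑ j, linf a * |b j| := by
        refine Finset.sum_le_sum fun j _ => ?_
        have hle : |a j| ≤ linf a :=
          le_ciSup (f := fun i => |a i|) (Set.Finite.bddAbove (Set.finite_range _)) j
        exact mul_le_mul_of_nonneg_right hle (abs_nonneg _)
    _ = linf a * l1 b := by rw [l1, ← Finset.mul_sum]

lemma sq2_sub {m : ℕ} (e u : Fin m → ℝ) :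
    sq2 (e - u) = sq2 e - 2 * (∑ i, e i * u i) + sq2 u := by
  have hpt : ∀ i, (e i - u i) ^ 2 = e i ^ 2 - 2 * (e i * u i) + u i ^ 2 := fun i => by ring
  simp only [sq2, Pi.sub_apply, hpt, Finset.sum_add_distrib, Finset.sum_sub_distrib,
    Finset.mul_sum]

lemma l1_split {d : ℕ} (S : Finset (Fin d)) (v : Fin d → ℝ) :
    l1 v = l1 (restr S v) + l1 (restr Sᶜ v) := by
  simp only [l1, restr, ← Finset.sum_add_distrib]
  refine Finset.sum_congr rfl fun j _ => ?_
  by_cases hj : j ∈ S <;> simp [hj]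

theorem stmt15 {n d1 d2 : ℕ} (hn : 0 < n) (hd1 : 0 < d1) (hd2 : 0 < d2)
    (h : ℝ) (hh : 0 < h) (lam : ℝ) (hlam : 0 < lam)
    (G1 : Matrix (Fin n) (Fin d1) ℝ) (G2 : Matrix (Fin n) (Fin d2) ℝ)
    (Y : Fin n → ℝ) (θ1star : Fin d1 → ℝ) (θ2star : Fin d2 → ℝ)
    (e : Fin n → ℝ) (he : e = Y - G1.mulVec θ1star - G2.mulVec θ2star)
    (S : Finset (Fin d2)) (hS : S = Finset.univ.filter (fun j => θ2star j ≠ 0))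
    (θ1til : Fin d1 → ℝ) (θ2til : Fin d2 → ℝ)
    (hmin : ∀ (θ1 : Fin d1 → ℝ) (θ2 : Fin d2 → ℝ),
      (1 / (n * h)) * sq2 (Y - G1.mulVec θ1til - G2.mulVec θ2til) + lam * l1 θ2til ≤
        (1 / (n * h)) * sq2 (Y - G1.mulVec θ1 - G2.mulVec θ2) + lam * l1 θ2)
    (hevent : (4 / (n * h)) * max (linf (G1ᵀ.mulVec e)) (linf (G2ᵀ.mulVec e)) ≤ lam) :
    (2 / (n * h)) * sq2 (G1.mulVec (θ1til - θ1star) + G2.mulVec (θ2til - θ2star)) ≤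
      lam * l1 (θ1til - θ1star) + 3 * lam * l1 (restr S θ2til - restr S θ2star) -
        lam * l1 (restr Sᶜ θ2til) := by
  set Δ1 := θ1til - θ1star with hΔ1
  set Δ2 := θ2til - θ2star with hΔ2
  set u := G1.mulVec Δ1 + G2.mulVec Δ2 with hu
  have hnh : (0:ℝ) < (n:ℝ) * h := by positivity
  set c : ℝ := 1 / ((n:ℝ) * h) with hc
  have hcpos : 0 < c := by positivity
  -- residual identity
  have hres : Y - G1.mulVec θ1til - G2.mulVec θ2til = e - u := by
    funext i
    simp [he, hu, hΔ1, hΔ2, Matrix.mulVec_sub]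
    ring
  -- basic inequality
  have hbasic := hmin θ1star θ2star
  rw [hres, ← he] at hbasic
  set D : ℝ := ∑ i, e i * u i with hD
  rw [sq2_sub] at hbasic
  -- D in terms of transposes
  have hDeq : D = (∑ j, (G1ᵀ.mulVec e) j * Δ1 j) + (∑ j, (G2ᵀ.mulVec e) j * Δ2 j) := by
    have h1 : ∀ (d : ℕ) (G : Matrix (Fin n) (Fin d) ℝ) (x : Fin d → ℝ),
        ∑ i, e i * (G.mulVec x) i = ∑ j, (Gᵀ.mulVec e) j * x j := by
      intro d G x
      have := Matrix.dotProduct_mulVec e G x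
      simpa [dotProduct, Matrix.mulVec_transpose] using this
    calc D = (∑ i, e i * (G1.mulVec Δ1) i) + (∑ i, e i * (G2.mulVec Δ2) i) := by
          simp [hD, hu, mul_add, Finset.sum_add_distrib]
      _ = _ := by rw [h1, h1]
  set M := max (linf (G1ᵀ.mulVec e)) (linf (G2ᵀ.mulVec e)) with hM
  have hL1 : 0 ≤ l1 Δ1 := l1_nonneg _
  have hL2 : 0 ≤ l1 Δ2 := l1_nonneg _
  have hDle : D ≤ M * (l1 Δ1 + l1 Δ2) := by
    rw [hDeq]
    have b1 := sum_mul_le_linf_l1 (G1ᵀ.mulVec e) Δ1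
    have b2 := sum_mul_le_linf_l1 (G2ᵀ.mulVec e) Δ2
    have m1 : linf (G1ᵀ.mulVec e) * l1 Δ1 ≤ M * l1 Δ1 :=
      mul_le_mul_of_nonneg_right (le_max_left _ _) hL1
    have m2 : linf (G2ᵀ.mulVec e) * l1 Δ2 ≤ M * l1 Δ2 :=
      mul_le_mul_of_nonneg_right (le_max_right _ _) hL2
    nlinarith [b1, b2, m1, m2]
  -- 4cD ≤ lam * (l1 Δ1 + l1 Δ2)
  have h4cD : 4 * (c * D) ≤ lam * (l1 Δ1 + l1 Δ2) := by
    have step1 : 4 * (c * D) ≤ 4 * (c * (M * (l1 Δ1 + l1 Δ2))) := by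
      have : c * D ≤ c * (M * (l1 Δ1 + l1 Δ2)) :=
        mul_le_mul_of_nonneg_left hDle hcpos.le
      linarith
    have step2 : 4 * (c * (M * (l1 Δ1 + l1 Δ2))) = ((4 / ((n:ℝ)*h)) * M) * (l1 Δ1 + l1 Δ2) := by
      rw [hc]; ring
    have step3 : ((4 / ((n:ℝ)*h)) * M) * (l1 Δ1 + l1 Δ2) ≤ lam * (l1 Δ1 + l1 Δ2) :=
      mul_le_mul_of_nonneg_right hevent (by linarith)
    linarith
  -- support decompositions
  have hstar0 : ∀ j ∉ S, θ2star j = 0 := by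
    intro j hj
    by_contra hne
    exact hj (by simp [hS, hne])
  have hrS : restr S θ2til - restr S θ2star = restr S Δ2 := by
    funext j; by_cases hj : j ∈ S <;> simp [restr, hj, hΔ2]
  have hrSc : restr Sᶜ Δ2 = restr Sᶜ θ2til := by
    funext j; by_cases hj : j ∈ S <;> simp [restr, hj, hΔ2, hstar0 j]
  have hBsplit : l1 θ2star = l1 (restr S θ2star) := by
    rw [l1_split S θ2star]
    have : restr Sᶜ θ2star = 0 := by
      funext j; by_cases hj : j ∈ S <;> simp [restr, hj, hstar0 j]
    simp [this, l1]
  have hAsplit : l1 θ2til = l1 (restr S θ2til) + l1 (restr Sᶜ θ2til) := l1_split S θ2til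
  have hΔsplit : l1 Δ2 = l1 (restr S Δ2) + l1 (restr Sᶜ θ2til) := by
    rw [l1_split S Δ2, hrSc]
  have htri : l1 (restr S θ2star) ≤ l1 (restr S θ2til) + l1 (restr S Δ2) := by
    rw [l1, l1, l1, ← Finset.sum_add_distrib]
    refine Finset.sum_le_sum fun j _ => ?_
    have : restr S θ2star j = restr S θ2til j - restr S Δ2 j := by
      by_cases hj : j ∈ S <;> simp [restr, hj, hΔ2]
    rw [this]
    exact (abs_sub _ _).trans (by simp [abs_sub_comm])
  -- combine
  have key : 2 * (c * sq2 u) ≤ 4 * (c * D) + 2 * lam * (l1 θ2star - l1 θ2til) := by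
    have expand : c * (sq2 e - 2 * D + sq2 u) = c * sq2 e - 2 * (c * D) + c * sq2 u := by ring
    rw [expand] at hbasic
    linarith
  have hgoal2 : (2 / ((n:ℝ) * h)) * sq2 u = 2 * (c * sq2 u) := by rw [hc]; ring
  rw [hrS, hgoal2]
  have hmul : lam * (l1 (restr S θ2star)) ≤ lam * (l1 (restr S θ2til) + l1 (restr S Δ2)) :=
    mul_le_mul_of_nonneg_left htri hlam.le
  nlinarith [key, h4cD, hΔsplit, hAsplit, hBsplit, hmul]
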